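/- arXiv:1810.06248 — 2 statements merged into one kernel-verified Lean document; each statement's English description precedes it below -/
import Mathlib

section
/- Let G₁ be the simple graph on vertex set {1,…,8} with edge set E₁ = {{1,7},{1,2},{2,3},{3,4},{4,5},{5,6},{6,7},{7,8},{2,8},{2,5},{5,8}}. Then Σ_{S ⊆ E₁, (V,S) connected} (−1)^{|S|−7} = 48, where the sum ranges over those subsets S of E₁ for which the spanning subgraph ({1,…,8}, S) is connected. (This is the evaluation T_{G₁}(1,0) = 48 of the Tutte polynomial, so the Euler characteristic (−1)⁷ T_{G₁}(1,0) of the complement of the associated elliptic arrangement equals −48.) -/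
open Finset SimpleGraph MvPolynomial

/-- Edge set of the first Schwärzler graph `G₁` on vertices `{1,…,8}`,
encoded on `Fin 8` via `i ↦ i - 1`. -/
def E1 : Finset (Sym2 (Fin 8)) :=
  {s(0,6), s(0,1), s(1,2), s(2,3), s(3,4), s(4,5), s(5,6), s(6,7), s(1,7), s(1,4), s(4,7)}

/-- Edge set of the second Schwärzler graph `G₂` on vertices `{1,…,8}`,
encoded on `Fin 8` via `i ↦ i - 1`. -/
def E2 : Finset (Sym2 (Fin 8)) :=
  {s(0,6), s(0,1), s(1,3), s(3,4), s(4,6), s(6,7), s(1,7), s(1,4), s(2,4), s(2,5), s(5,7)}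

/-- The number of connected components of the spanning subgraph of the complete
graph on `Fin 8` with edge set `S`. -/
noncomputable def numComp (S : Finset (Sym2 (Fin 8))) : ℕ :=
  Nat.card (SimpleGraph.fromEdgeSet (↑S : Set (Sym2 (Fin 8)))).ConnectedComponent

/-- The (matroid) rank of an edge subset `S`: `8` minus the number of connected
components of the spanning subgraph `(V, S)`. -/
noncomputable def rk (S : Finset (Sym2 (Fin 8))) : ℕ := 8 - numComp S

instance (s : Set (Sym2 (Fin 8))) [DecidablePred (· ∈ s)] :
    DecidableRel (SimpleGraph.fromEdgeSet s).Adj := fun a b =>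
  decidable_of_iff (s(a, b) ∈ s ∧ a ≠ b) (SimpleGraph.fromEdgeSet_adj s).symm

def step (S : Finset (Sym2 (Fin 8))) (A : Finset (Fin 8)) : Finset (Fin 8) :=
  A ∪ univ.filter (fun v => ∃ a ∈ A, s(a,v) ∈ S)

def conn (S : Finset (Sym2 (Fin 8))) : Prop :=
  (step S)^[8] {0} = univ

instance : DecidablePred conn := fun S => by unfold conn; infer_instance

lemma subset_step (S : Finset (Sym2 (Fin 8))) (A : Finset (Fin 8)) : A ⊆ step S A :=
  Finset.subset_union_left

lemma mem_iterate_reachable (S : Finset (Sym2 (Fin 8))) (n : ℕ) (v : Fin 8)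
    (hv : v ∈ (step S)^[n] {0}) :
    (SimpleGraph.fromEdgeSet (↑S : Set (Sym2 (Fin 8)))).Reachable 0 v := by
  induction n generalizing v with
  | zero => simp at hv; subst hv; rfl
  | succ n ih =>
    rw [Function.iterate_succ_apply'] at hv
    rcases Finset.mem_union.1 hv with h | h
    · exact ih v h
    · obtain ⟨a, ha, hav⟩ := (Finset.mem_filter.1 h).2
      rcases eq_or_ne a v with rfl | hne
      · exact ih _ ha
      · exact (ih a ha).trans (Adj.reachable (by simp [SimpleGraph.fromEdgeSet_adj, hav, hne]))

lemma walk_mem_iterate (S : Finset (Sym2 (Fin 8))) {u v : Fin 8}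
    (p : (SimpleGraph.fromEdgeSet (↑S : Set (Sym2 (Fin 8)))).Walk u v) :
    v ∈ (step S)^[p.length] {u} := by
  induction p using SimpleGraph.Walk.concatRec with
  | Hnil => simp
  | Hconcat q h ih =>
    rw [SimpleGraph.Walk.length_concat, Function.iterate_succ_apply']
    refine Finset.mem_union_right _ (Finset.mem_filter.2 ⟨Finset.mem_univ _, _, ih, ?_⟩)
    have := h.1
    simpa using this

lemma iterate_mono (S : Finset (Sym2 (Fin 8))) {m n : ℕ} (h : m ≤ n) :
    (step S)^[m] {0} ⊆ (step S)^[n] {0} := by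
  induction n with
  | zero => simpa [Nat.le_zero.1 h]
  | succ n ih =>
    rcases Nat.lt_or_ge m (n+1) with h' | h'
    · rw [Function.iterate_succ_apply']
      exact (ih (Nat.lt_succ_iff.1 h')).trans (subset_step _ _)
    · have : m = n + 1 := le_antisymm h h'
      subst this; rfl

lemma conn_iff (S : Finset (Sym2 (Fin 8))) :
    (SimpleGraph.fromEdgeSet (↑S : Set (Sym2 (Fin 8)))).Connected ↔ conn S := by
  constructor
  · intro h
    apply Finset.eq_univ_iff_forall.2
    intro v
    obtain ⟨w⟩ := h.preconnected 0 v
    have p := w.toPath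
    have hl : p.1.length < 8 := by
      have := p.2.length_lt
      simpa using this
    exact iterate_mono S hl.le (walk_mem_iterate S p.1)
  · intro h
    rw [SimpleGraph.connected_iff]
    refine ⟨fun u v => ?_, ⟨0⟩⟩
    have hu := mem_iterate_reachable S 8 u (by rw [h]; exact Finset.mem_univ u)
    have hv := mem_iterate_reachable S 8 v (by rw [h]; exact Finset.mem_univ v)
    exact hu.symm.trans hv


instance natLorComm : Std.Commutative Nat.lor := ⟨Nat.lor_comm⟩
instance natLorAssoc : Std.Associative Nat.lor := ⟨Nat.lor_assoc⟩

lemma ne_zero_iff_testBit (n : ℕ) : n ≠ 0 ↔ ∃ i, n.testBit i := by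
  constructor
  · intro h
    obtain ⟨i, hi, -⟩ := Nat.exists_most_significant_bit h
    exact ⟨i, hi⟩
  · rintro ⟨i, hi⟩ rfl
    simp at hi

lemma testBit_fold {α : Type*} (s : Finset α) (f : α → ℕ) (k : ℕ) :
    (s.fold Nat.lor 0 f).testBit k = true ↔ ∃ a ∈ s, (f a).testBit k := by
  induction s using Finset.cons_induction with
  | empty => simp
  | cons a s ha ih =>
    rw [Finset.fold_cons, show ∀ x y : ℕ, Nat.lor x y = x ||| y from fun _ _ => rfl]
    simp [Nat.testBit_lor, ih]

def emask (e : Sym2 (Fin 8)) : ℕ :=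
  Sym2.lift ⟨fun a b => 2^(8*a.val+b.val) ||| 2^(8*b.val+a.val),
    fun a b => Nat.lor_comm _ _⟩ e

def adjMask (S : Finset (Sym2 (Fin 8))) : ℕ := S.fold Nat.lor 0 emask

def encode (A : Finset (Fin 8)) : ℕ := A.fold Nat.lor 0 (fun v => 2^v.val)

lemma testBit_encode (A : Finset (Fin 8)) (k : ℕ) :
    (encode A).testBit k = true ↔ ∃ v ∈ A, v.val = k := by
  rw [encode, testBit_fold]
  simp [Nat.testBit_two_pow]

lemma mem_encode (A : Finset (Fin 8)) (v : Fin 8) :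
    (encode A).testBit v.val = true ↔ v ∈ A := by
  rw [testBit_encode]
  constructor
  · rintro ⟨w, hw, h⟩
    rwa [← Fin.val_injective h]
  · intro h; exact ⟨v, h, rfl⟩

lemma testBit_adjMask (S : Finset (Sym2 (Fin 8))) (x y : Fin 8) :
    (adjMask S).testBit (8*x.val+y.val) = true ↔ s(x,y) ∈ S := by
  rw [adjMask, testBit_fold]
  constructor
  · rintro ⟨e, he, hbit⟩
    induction e using Sym2.ind with
    | _ a b =>
      rw [emask, Sym2.lift_mk, Nat.testBit_lor] at hbit
      rcases Bool.or_eq_true_iff.1 hbit with h | h <;>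
        rw [Nat.testBit_two_pow] at h <;> simp only [decide_eq_true_eq] at h
      · have hax : a = x := Fin.val_injective (by omega)
        have hby : b = y := Fin.val_injective (by omega)
        rwa [hax, hby] at he
      · have hay : a = y := Fin.val_injective (by omega)
        have hbx : b = x := Fin.val_injective (by omega)
        rw [hay, hbx, Sym2.eq_swap] at he
        exact he
  · intro h
    refine ⟨s(x,y), h, ?_⟩
    rw [emask, Sym2.lift_mk, Nat.testBit_lor, Nat.testBit_two_pow]
    simp

def expand (adj m : ℕ) : ℕ :=
  m ||| Finset.univ.fold Nat.lor 0
    (fun v : Fin 8 => if adj >>> (8*v.val) &&& 255 &&& m ≠ 0 then 2^v.val else 0)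

def connN (S : Finset (Sym2 (Fin 8))) : Prop :=
  (expand (adjMask S))^[8] 1 = 255

instance : DecidablePred connN := fun S => by unfold connN; infer_instance

lemma cond_iff (S : Finset (Sym2 (Fin 8))) (A : Finset (Fin 8)) (v : Fin 8) :
    adjMask S >>> (8*v.val) &&& 255 &&& encode A ≠ 0 ↔ ∃ a ∈ A, s(a,v) ∈ S := by
  rw [ne_zero_iff_testBit]
  constructor
  · rintro ⟨i, hi⟩
    rw [Nat.testBit_and, Nat.testBit_and, Nat.testBit_shiftRight,
      show (255:ℕ) = 2^8-1 by norm_num, Nat.testBit_two_pow_sub_one] at hi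
    simp only [Bool.and_eq_true, decide_eq_true_eq] at hi
    obtain ⟨⟨hadj, hlt⟩, hm⟩ := hi
    obtain ⟨a, haA, hav⟩ := (testBit_encode A i).1 hm
    refine ⟨a, haA, ?_⟩
    rw [Sym2.eq_swap]
    exact (testBit_adjMask S v a).1 (by rw [hav]; exact hadj)
  · rintro ⟨a, haA, haS⟩
    refine ⟨a.val, ?_⟩
    rw [Nat.testBit_and, Nat.testBit_and, Nat.testBit_shiftRight,
      show (255:ℕ) = 2^8-1 by norm_num, Nat.testBit_two_pow_sub_one]
    rw [Sym2.eq_swap] at haS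
    simp [(testBit_adjMask S v a).2 haS, (mem_encode A a).2 haA, a.isLt]

lemma expand_encode (S : Finset (Sym2 (Fin 8))) (A : Finset (Fin 8)) :
    expand (adjMask S) (encode A) = encode (step S A) := by
  apply Nat.eq_of_testBit_eq
  intro k
  rw [Bool.eq_iff_iff]
  unfold _root_.expand
  simp only [Nat.testBit_lor, Bool.or_eq_true_iff, testBit_fold, testBit_encode]
  constructor
  · rintro (⟨v, hvA, rfl⟩ | ⟨v, -, hv⟩)
    · exact ⟨v, Finset.mem_union_left _ hvA, rfl⟩
    · by_cases hc : adjMask S >>> (8*v.val) &&& 255 &&& encode A ≠ 0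
      · rw [if_pos hc, Nat.testBit_two_pow] at hv
        simp only [decide_eq_true_eq] at hv
        subst hv
        exact ⟨v, Finset.mem_union_right _ (Finset.mem_filter.2
          ⟨Finset.mem_univ _, (cond_iff S A v).1 hc⟩), rfl⟩
      · rw [if_neg hc] at hv
        simp at hv
  · rintro ⟨v, hv, rfl⟩
    rcases Finset.mem_union.1 hv with h | h
    · exact Or.inl ⟨v, h, rfl⟩
    · refine Or.inr ⟨v, Finset.mem_univ _, ?_⟩
      rw [if_pos ((cond_iff S A v).2 (Finset.mem_filter.1 h).2), Nat.testBit_two_pow]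
      simp

lemma iterate_expand (S : Finset (Sym2 (Fin 8))) (A : Finset (Fin 8)) (n : ℕ) :
    (expand (adjMask S))^[n] (encode A) = encode ((step S)^[n] A) := by
  induction n with
  | zero => rfl
  | succ n ih =>
    rw [Function.iterate_succ_apply', Function.iterate_succ_apply', ih, expand_encode]

lemma encode_eq_univ (B : Finset (Fin 8)) : encode B = 255 ↔ B = Finset.univ := by
  constructor
  · intro h
    apply Finset.eq_univ_iff_forall.2
    intro v
    rw [← mem_encode, h, show (255:ℕ) = 2^8-1 by norm_num, Nat.testBit_two_pow_sub_one]
    simp [v.isLt]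
  · rintro rfl
    decide

lemma connN_iff (S : Finset (Sym2 (Fin 8))) : conn S ↔ connN S := by
  rw [conn, connN, show (1:ℕ) = encode {0} by decide, iterate_expand, encode_eq_univ]

set_option maxRecDepth 100000 in
set_option maxHeartbeats 4000000 in
/-- The signed count of connected spanning subgraphs of `G₁` (i.e. the Tutte
evaluation `T_{G₁}(1,0)`) equals `48`; hence the Euler characteristic of the
complement of the associated elliptic arrangement is `(-1)^7 · 48 = -48`. -/
theorem signed_connected_count_G1 :
    (∑ S ∈ E1.powerset.filter
        (fun (S : Finset (Sym2 (Fin 8))) => (SimpleGraph.fromEdgeSet (↑S : Set (Sym2 (Fin 8)))).Connected),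
      (-1 : ℤ) ^ (S.card - 7)) = 48 := by
  rw [Finset.filter_congr (fun S _ => (conn_iff S).trans (connN_iff S))]
  decide
end

section
/- Let G₁ be the simple graph on vertex set {1,…,8} with edge set E₁ = {{1,7},{1,2},{2,3},{3,4},{4,5},{5,6},{6,7},{7,8},{2,8},{2,5},{5,8}}, and let G₂ be the simple graph on the same vertex set with edge set E₂ = {{1,7},{1,2},{2,4},{4,5},{5,7},{7,8},{2,8},{2,5},{3,5},{3,6},{6,8}}. Then G₁ and G₂ have the same chromatic polynomial: for every natural number n, the number of proper colorings of G₁ with n colors equals the number of proper colorings of G₂ with n colors (equivalently, Σ_{S ⊆ E₁} (−1)^{|S|} n^{c₁(S)} = Σ_{S ⊆ E₂} (−1)^{|S|} n^{c₂(S)}, where cᵢ(S) is the number of connected components of the spanning subgraph of Gᵢ with edge set S). -/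
open Finset SimpleGraph MvPolynomial

/-!
Both graphs are subdivisions of `K₄` with branch vertices `v1, v4, v6, v7` (the paper's
`2, 5, 7, 8`), in which one pair of branch vertices is joined by two paths. Summing out the
interior vertex of a path `x - z - y` leaves the weight `(n - 2) + [x = y]`, and the two interior
vertices of a path of length three leave `(n² - 3n + 3) - [x = y]`. What remains is a sum over
colourings of the four branch vertices, which for both graphs evaluates to
`n (n - 1) (n - 2)² (n² - 3n + 3) (n² - 3n + 4)`.
-/

lemma forall_mk_mem_ne_iff {V β : Type*} (f : V → β) (E : Finset (Sym2 V)) :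
    (∀ u v, s(u, v) ∈ E → f u ≠ f v) ↔ ∀ e ∈ E, ¬(e.map f).IsDiag := by
  refine ⟨fun h e he => ?_, fun h u v huv => h _ huv⟩
  induction e using Sym2.ind with
  | h u v => exact h u v he

lemma forall_mk_mem_E1_ne_iff {α : Type*} (f : Fin 8 → α) :
    (∀ u v : Fin 8, s(u, v) ∈ E1 → f u ≠ f v) ↔
    ((f 1 ≠ f 4 ∧ f 4 ≠ f 7 ∧ f 7 ≠ f 1) ∧ f 6 ≠ f 7) ∧ (f 1 ≠ f 2 ∧ f 2 ≠ f 3 ∧ f 3 ≠ f 4) ∧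
      (f 6 ≠ f 0 ∧ f 0 ≠ f 1) ∧ (f 6 ≠ f 5 ∧ f 5 ≠ f 4) := by
  simp only [forall_mk_mem_ne_iff, E1, Finset.forall_mem_insert, Finset.mem_singleton, forall_eq,
    Sym2.map_mk, Sym2.mk_isDiag_iff]
  grind

lemma forall_mk_mem_E2_ne_iff {α : Type*} (f : Fin 8 → α) :
    (∀ u v : Fin 8, s(u, v) ∈ E2 → f u ≠ f v) ↔
    (f 1 ≠ f 4 ∧ f 7 ≠ f 1) ∧ (f 1 ≠ f 3 ∧ f 3 ≠ f 4) ∧ (f 4 ≠ f 2 ∧ f 2 ≠ f 5 ∧ f 5 ≠ f 7) ∧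
      (f 4 ≠ f 6 ∧ f 6 ≠ f 7) ∧ (f 6 ≠ f 0 ∧ f 0 ≠ f 1) := by
  simp only [forall_mk_mem_ne_iff, E2, Finset.forall_mem_insert, Finset.mem_singleton, forall_eq,
    Sym2.map_mk, Sym2.mk_isDiag_iff]
  grind

lemma boole_and {R : Type*} [MulZeroOneClass R] (P Q : Prop) [Decidable P] [Decidable Q] :
    (if P ∧ Q then 1 else 0 : R) = (if P then 1 else 0) * (if Q then 1 else 0) := by
  rw [ite_zero_mul_ite_zero, mul_one]

section ColoringSums

variable {α R : Type*} [Fintype α] [CommRing R]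

local notation "N" => (Fintype.card α : R)
local notation "𝕀" P:max => ite P (1 : R) 0

lemma sum_fun_fin_succ {M : Type*} [AddCommMonoid M] {k : ℕ} (F : (Fin (k + 1) → α) → M) :
    ∑ f, F f = ∑ a, ∑ g : Fin k → α, F (Matrix.vecCons a g) := by
  rw [← (Fin.consEquiv fun _ => α).sum_comp, Fintype.sum_prod_type]
  rfl

lemma sum_fun_comp_perm {ι M : Type*} [Fintype ι] [DecidableEq ι] [AddCommMonoid M]
    (σ : Equiv.Perm ι) (F : (ι → α) → M) : ∑ f, F (f ∘ σ) = ∑ f, F f :=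
  (σ.symm.arrowCongr (Equiv.refl α)).sum_comp F

/-- Branch vertices outermost, so that the interior vertices of the paths are summed out first. -/
lemma sum_fun_fin_eight_reindex {M : Type*} [AddCommMonoid M] (F : (Fin 8 → α) → M) :
    ∑ f, F f =
      ∑ v1, ∑ v4, ∑ v7, ∑ v6, ∑ v2, ∑ v3, ∑ v0, ∑ v5, F ![v0, v1, v2, v3, v4, v5, v6, v7] := by
  rw [← sum_fun_comp_perm (Equiv.ofBijective ![6, 0, 4, 5, 1, 7, 3, 2] (by decide))]
  simp only [sum_fun_fin_succ, Finset.univ_unique, Finset.sum_singleton]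
  congr! with v1 v4 v7 v6 v2 v3 v0 v5
  funext i
  fin_cases i <;> rfl

lemma sum_eq_sum_add_of_eq_on_compl {h : α → R} (s : Finset α) {k : R}
    (hk : ∀ z ∉ s, h z = k) : ∑ z, h z = ∑ z ∈ s, h z + (N - #s) * k := by
  classical
  rw [← Finset.sum_add_sum_compl s h,
    Finset.sum_congr rfl fun z hz => hk z (Finset.mem_compl.mp hz), Finset.sum_const,
    Finset.card_compl, nsmul_eq_mul, Nat.cast_sub (Finset.card_le_univ s)]

variable [DecidableEq α]

lemma sum_boole_ne_mul (x : α) (g : α → R) : ∑ z, 𝕀 (x ≠ z) * g z = ∑ z, g z - g x := by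
  have h : ∀ z, 𝕀 (x ≠ z) * g z = g z - if x = z then g z else 0 := by
    intro z; by_cases hz : x = z <;> simp [hz]
  simp only [h, Finset.sum_sub_distrib, Finset.sum_ite_eq, Finset.mem_univ, if_true]

lemma sum_boole_ne (x : α) : ∑ z, 𝕀 (x ≠ z) = N - 1 := by
  simpa using sum_boole_ne_mul (R := R) x 1

lemma sum_boole_path_two (x y : α) : ∑ z, 𝕀 (x ≠ z ∧ z ≠ y) = N - 2 + 𝕀 (x = y) := by
  rw [sum_eq_sum_add_of_eq_on_compl {x, y} (k := 1) fun z hz => by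
    simp only [Finset.mem_insert, Finset.mem_singleton, not_or] at hz; simp [Ne.symm hz.1, hz.2]]
  by_cases hxy : x = y
  · subst hxy
    simp only [Finset.pair_eq_singleton, Finset.sum_singleton, Finset.card_singleton, ne_eq,
      not_true_eq_false, and_self, ↓reduceIte, Nat.cast_one, mul_one, zero_add]
    ring
  · simp [hxy, Finset.card_pair hxy, Finset.sum_pair hxy]

lemma sum_boole_path_three (x y : α) :
    ∑ z, ∑ w, 𝕀 (x ≠ z ∧ z ≠ w ∧ w ≠ y) = N ^ 2 - 3 * N + 3 - 𝕀 (x = y) := by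
  simp only [boole_and (x ≠ _), ← Finset.mul_sum, sum_boole_path_two, sum_boole_ne_mul,
    Finset.sum_add_distrib, Finset.sum_const, Finset.card_univ, nsmul_eq_mul, Finset.sum_ite_eq',
    Finset.mem_univ, ↓reduceIte]
  ring

lemma sum_boole_triangle :
    ∑ a : α, ∑ b, ∑ c, 𝕀 (a ≠ b ∧ b ≠ c ∧ c ≠ a) = N * (N - 1) * (N - 2) := by
  have h : ∀ a b : α, ∑ c, 𝕀 (a ≠ b ∧ b ≠ c ∧ c ≠ a) = 𝕀 (a ≠ b) * (N - 2) := by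
    intro a b
    rw [Finset.sum_congr rfl fun c _ => boole_and _ _, ← Finset.mul_sum, sum_boole_path_two]
    by_cases hab : a = b
    · simp [hab]
    · simp [hab, Ne.symm hab]
  simp only [h, sum_boole_ne_mul, Finset.sum_const, Finset.card_univ, nsmul_eq_mul]
  ring

lemma sum_boole_path_two_mul_add_boole (x y w : α) (m : R) :
    ∑ z, 𝕀 (x ≠ z ∧ z ≠ y) * (m + 𝕀 (z = w)) =
      m * (N - 2 + 𝕀 (x = y)) + 𝕀 (x ≠ w ∧ w ≠ y) := by
  simp only [mul_add, mul_one, mul_ite, mul_zero, Finset.sum_add_distrib, Finset.sum_ite_eq',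
    Finset.mem_univ, if_true, ← Finset.sum_mul, sum_boole_path_two]
  split_ifs <;> ring

lemma sum_boole_ne_mul_comp_boole {a c : α} (hac : a ≠ c) (G : R → R) :
    ∑ z, 𝕀 (z ≠ c) * G (𝕀 (a = z)) = (N - 2) * G 0 + G 1 := by
  rw [sum_eq_sum_add_of_eq_on_compl {a, c} (k := G 0) fun z hz => by
    simp only [Finset.mem_insert, Finset.mem_singleton, not_or] at hz; simp [hz.2, Ne.symm hz.1]]
  simp only [Finset.sum_pair hac, Finset.card_pair hac, hac, ne_eq, ite_not, ite_mul, zero_mul,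
    one_mul, ↓reduceIte, add_zero, Nat.cast_ofNat]
  ring

lemma sum_boole_ne_mul_add_boole_mul_add_boole {a b c : α} (hab : a ≠ b) (hbc : b ≠ c)
    (hca : c ≠ a) (m : R) :
    ∑ z, 𝕀 (z ≠ c) * ((m + 𝕀 (z = a)) * (m + 𝕀 (z = b))) = (N - 1) * m ^ 2 + 2 * m := by
  rw [sum_eq_sum_add_of_eq_on_compl {a, b, c} (k := m ^ 2) fun z hz => by
    simp only [Finset.mem_insert, Finset.mem_singleton, not_or] at hz
    simp only [hz.1, hz.2.1, hz.2.2, ne_eq, not_false_eq_true, ↓reduceIte, add_zero, one_mul]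
    ring]
  rw [Finset.sum_insert (by simp [hab, hca.symm]), Finset.sum_pair hbc,
    Finset.card_insert_of_notMem (by simp [hab, hca.symm]), Finset.card_pair hbc]
  simp only [hab, hbc, hca, hab.symm, hbc.symm, hca.symm, ne_eq, not_false_eq_true,
    not_true_eq_false, ↓reduceIte, add_zero, one_mul, zero_mul, Nat.reduceAdd, Nat.cast_ofNat]
  ring

lemma card_proper_colorings_E1 :
    (Fintype.card {f : Fin 8 → α // ∀ u v : Fin 8, s(u, v) ∈ E1 → f u ≠ f v} : R) =
      N * (N - 1) * (N - 2) ^ 2 * (N ^ 2 - 3 * N + 3) * (N ^ 2 - 3 * N + 4) := by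
  rw [Fintype.card_subtype, Finset.natCast_card_filter, sum_fun_fin_eight_reindex]
  simp only [forall_mk_mem_E1_ne_iff, Matrix.cons_val]
  -- splitting only conjunctions of conjunctions keeps the conditions of each path together
  simp only [boole_and (_ ∧ _) (_ ∧ _), ← Finset.mul_sum, ← Finset.sum_mul, sum_boole_path_two,
    sum_boole_path_three]
  have sum_v6 : ∀ v1 v4 v7 : α, ∑ v6, 𝕀 ((v1 ≠ v4 ∧ v4 ≠ v7 ∧ v7 ≠ v1) ∧ v6 ≠ v7) *
      ((N ^ 2 - 3 * N + 3 - 𝕀 (v1 = v4)) * ((N - 2 + 𝕀 (v6 = v1)) * (N - 2 + 𝕀 (v6 = v4)))) =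
      𝕀 (v1 ≠ v4 ∧ v4 ≠ v7 ∧ v7 ≠ v1) *
        ((N ^ 2 - 3 * N + 3) * ((N - 1) * (N - 2) ^ 2 + 2 * (N - 2))) := by
    intro v1 v4 v7
    by_cases h : v1 ≠ v4 ∧ v4 ≠ v7 ∧ v7 ≠ v1
    · rw [if_pos h, one_mul, ← sum_boole_ne_mul_add_boole_mul_add_boole h.1 h.2.1 h.2.2,
        Finset.mul_sum]
      refine Fintype.sum_congr _ _ fun v6 => ?_
      simp only [and_iff_right h, if_neg h.1, sub_zero]
      ring
    · simp [h]
  simp only [sum_v6, ← Finset.sum_mul, sum_boole_triangle]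
  ring

lemma card_proper_colorings_E2 :
    (Fintype.card {f : Fin 8 → α // ∀ u v : Fin 8, s(u, v) ∈ E2 → f u ≠ f v} : R) =
      N * (N - 1) * (N - 2) ^ 2 * (N ^ 2 - 3 * N + 3) * (N ^ 2 - 3 * N + 4) := by
  rw [Fintype.card_subtype, Finset.natCast_card_filter, sum_fun_fin_eight_reindex]
  simp only [forall_mk_mem_E2_ne_iff, Matrix.cons_val]
  simp only [boole_and (_ ∧ _) (_ ∧ _), ← Finset.mul_sum, ← Finset.sum_mul, sum_boole_path_two,
    sum_boole_path_three, sum_boole_path_two_mul_add_boole]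
  have sum_v7 : ∀ v1 v4 : α, ∑ v7, 𝕀 (v1 ≠ v4 ∧ v7 ≠ v1) * ((N - 2 + 𝕀 (v1 = v4)) *
      ((N ^ 2 - 3 * N + 3 - 𝕀 (v4 = v7)) *
        ((N - 2) * (N - 2 + 𝕀 (v4 = v7)) + 𝕀 (v4 ≠ v1 ∧ v1 ≠ v7)))) =
      𝕀 (v1 ≠ v4) * (N - 2) * ((N - 2) * (N ^ 2 - 3 * N + 3) * ((N - 2) * (N - 2) + 1) +
        (N ^ 2 - 3 * N + 2) * ((N - 2) * (N - 1) + 1)) := by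
    intro v1 v4
    by_cases h : v1 = v4
    · simp [h]
    set G : R → R := fun t => (N - 2) * ((N ^ 2 - 3 * N + 3 - t) * ((N - 2) * (N - 2 + t) + 1))
    calc _ = ∑ v7, 𝕀 (v7 ≠ v1) * G (𝕀 (v4 = v7)) := by
          refine Fintype.sum_congr _ _ fun v7 => ?_
          by_cases h' : v7 = v1
          · simp [h']
          · simp [G, h, h', Ne.symm h, Ne.symm h']
      _ = _ := by
          rw [sum_boole_ne_mul_comp_boole (Ne.symm h)]
          simp only [G, h, sub_zero, add_zero, ne_eq, not_false_eq_true, ↓reduceIte, one_mul]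
          ring
  simp only [sum_v7, ← Finset.sum_mul, sum_boole_ne, Finset.sum_const, Finset.card_univ,
    nsmul_eq_mul]
  ring

end ColoringSums

/-- The two Schwärzler graphs have the same chromatic polynomial: for every `n`,
they admit the same number of proper colorings with `n` colors. -/
theorem chromatic_eq (n : ℕ) :
    Fintype.card {f : Fin 8 → Fin n // ∀ u v : Fin 8, s(u, v) ∈ E1 → f u ≠ f v} =
    Fintype.card {f : Fin 8 → Fin n // ∀ u v : Fin 8, s(u, v) ∈ E2 → f u ≠ f v} := by
  exact_mod_cast (card_proper_colorings_E1 (α := Fin n) (R := ℤ)).trans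
    (card_proper_colorings_E2 (α := Fin n) (R := ℤ)).symm
end
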